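/- Define a binary operation ▷ on ℝ⁵ by (a₁,a₂,a₃,a₄,a₅) ▷ (b₁,b₂,b₃,b₄,b₅) = ( b₁, b₂, b₃ + a₁(b₁+b₂), a₁b₃ + b₄ + (½ b₁ a₁ + a₂ + ½ a₁²)(b₁+b₂), (a₂ + ½ a₁²)b₃ + a₁b₄ + b₅ + (a₁a₂ + ⅙ a₁³ + ¼ b₁ a₁² + ½ b₂ a₁ + ½ b₁ a₂ + ⅙ b₁² a₁)(b₁+b₂) ). Then (ℝ⁵, ▷) is a pointed rack with neutral element 0: for every a ∈ ℝ⁵ the map a ▷ – is a bijection of ℝ⁵, a ▷ (b ▷ c) = (a ▷ b) ▷ (a ▷ c) for all a,b,c ∈ ℝ⁵, and 0 ▷ b = b, a ▷ 0 = 0 for all a,b ∈ ℝ⁵. -/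
import Mathlib


/-- The rack product on `ℝ⁵ = ℝ² × ℝ³` integrating the 5-dimensional non-split Leibniz
algebra of the paper's example. -/
noncomputable def rackOpR5 (a b : Fin 5 → ℝ) : Fin 5 → ℝ :=
  ![b 0, b 1,
    b 2 + a 0 * (b 0 + b 1),
    a 0 * b 2 + b 3 + (b 0 * a 0 / 2 + a 1 + a 0 ^ 2 / 2) * (b 0 + b 1),
    (a 1 + a 0 ^ 2 / 2) * b 2 + a 0 * b 3 + b 4
      + (a 0 * a 1 + a 0 ^ 3 / 6 + b 0 * a 0 ^ 2 / 4 + b 1 * a 0 / 2 + b 0 * a 1 / 2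
          + b 0 ^ 2 * a 0 / 6) * (b 0 + b 1)]

/-- The inverse of `rackOpR5 a`. -/
noncomputable def rackOpR5Inv (a c : Fin 5 → ℝ) : Fin 5 → ℝ :=
  ![c 0, c 1,
    c 2 - a 0 * (c 0 + c 1),
    c 3 - a 0 * (c 2 - a 0 * (c 0 + c 1))
      - (c 0 * a 0 / 2 + a 1 + a 0 ^ 2 / 2) * (c 0 + c 1),
    c 4 - (a 1 + a 0 ^ 2 / 2) * (c 2 - a 0 * (c 0 + c 1))
      - a 0 * (c 3 - a 0 * (c 2 - a 0 * (c 0 + c 1))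
          - (c 0 * a 0 / 2 + a 1 + a 0 ^ 2 / 2) * (c 0 + c 1))
      - (a 0 * a 1 + a 0 ^ 3 / 6 + c 0 * a 0 ^ 2 / 4 + c 1 * a 0 / 2 + c 0 * a 1 / 2
          + c 0 ^ 2 * a 0 / 6) * (c 0 + c 1)]

/-- The displayed binary operation makes `ℝ⁵` a pointed rack with neutral
element `0`: each `a ▷ –` is a bijection, `a ▷ (b ▷ c) = (a ▷ b) ▷ (a ▷ c)`, `0 ▷ b = b`
and `a ▷ 0 = 0`. (Being polynomial, the operation is smooth, so it is a Lie rack.) -/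
theorem rackOpR5_is_pointed_rack :
    (∀ a : Fin 5 → ℝ, Function.Bijective (rackOpR5 a)) ∧
    (∀ a b c : Fin 5 → ℝ, rackOpR5 a (rackOpR5 b c) = rackOpR5 (rackOpR5 a b) (rackOpR5 a c)) ∧
    (∀ b : Fin 5 → ℝ, rackOpR5 0 b = b) ∧
    (∀ a : Fin 5 → ℝ, rackOpR5 a 0 = 0) := by
  refine ⟨?_, ?_, ?_, ?_⟩
  · intro a
    refine Function.bijective_iff_has_inverse.mpr ⟨rackOpR5Inv a, ?_, ?_⟩
    · intro b
      funext i
      fin_cases i <;> simp [rackOpR5, rackOpR5Inv] <;> ring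
    · intro c
      funext i
      fin_cases i <;> simp [rackOpR5, rackOpR5Inv] <;> ring
  · intro a b c
    funext i
    fin_cases i <;> simp [rackOpR5] <;> ring
  · intro b
    funext i
    fin_cases i <;> simp [rackOpR5]
  · intro a
    funext i
    fin_cases i <;> simp [rackOpR5] <;> ring
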